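/- arXiv:2208.04809 — 2 statements merged into one kernel-verified Lean document; each statement's English description precedes it below -/
import Mathlib

section
/- Fix integers L ≥ 1 and n ≥ 1, and let w^{(1)},…,w^{(K)} be words over the alphabet [L], each of length at most n, which are pairwise not cyclically equivalent. Then there exists N₀ such that for every N ≥ N₀ the polynomial functions p_{w^{(1)};N},…,p_{w^{(K)};N} are algebraically independent over ℂ in the ℂ-algebra of all functions (Mat(N,ℂ))^L → ℂ (with pointwise operations). -/
/-!
Give each word `w⁽ˢ⁾` of length `dₛ` its own diagonal block of size `dₛ`, on which `X_a` acts as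
`xₛ` times the cyclic shift restricted to the positions labelled `a` by `w⁽ˢ⁾`, and pad with a
zero block up to any size `N ≥ ∑ₛ dₛ`. The trace of a word `u` on the block of `w⁽ˢ⁾` is
`xₛ^ℓ(u)` times the number of starting points from which `u` can be read off the labelled cycle;
this vanishes unless `dₛ ∣ ℓ(u)`, and for `ℓ(u) = dₛ` it vanishes unless `u` is a rotation of
`w⁽ˢ⁾`. Hence `p_{w⁽ᵗ⁾}` evaluates to `∑ₛ cₜₛ xₛ^{dₜ}` with `cₜₜ ≠ 0` and `cₜₛ = 0` whenever
`s ≠ t` and `dₜ ≤ dₛ`. Such a system can be solved over `ℂ` degree by degree, so the words take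
every value in `ℂᴷ`, and a polynomial vanishing on them vanishes everywhere.
-/

noncomputable section

/-- The product `X_{w₁} ⋯ X_{w_n}` of matrices along a word `w`. -/
def wordProd (L N : ℕ) (X : Fin L → Matrix (Fin N) (Fin N) ℂ) (w : List (Fin L)) :
    Matrix (Fin N) (Fin N) ℂ :=
  (w.map X).prod

/-- The trace-word polynomial function `p_{w;N}(X₁,…,X_L) = tr(X_{w₁} ⋯ X_{w_n})`. -/
def pW (L N : ℕ) (w : List (Fin L)) : (Fin L → Matrix (Fin N) (Fin N) ℂ) → ℂ :=
  fun X => (wordProd L N X w).trace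

/-- The matrix-entry polynomial function `p_{ij;w;N}(X₁,…,X_L) = (X_{w₁} ⋯ X_{w_n})_{ij}`. -/
def pE (L N : ℕ) (w : List (Fin L)) (i j : Fin N) :
    (Fin L → Matrix (Fin N) (Fin N) ℂ) → ℂ :=
  fun X => wordProd L N X w i j

open Matrix Finset

theorem algebraicIndependent_of_surjective {X ι R : Type*} [CommRing R] [IsDomain R] [Infinite R]
    (F : X → ι → R) (hF : Function.Surjective F) :
    AlgebraicIndependent R (fun i x => F x i) := by
  rw [algebraicIndependent_iff_injective_aeval, injective_iff_map_eq_zero]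
  intro p hp
  refine MvPolynomial.funext fun y => ?_
  obtain ⟨x, rfl⟩ := hF y
  have hx := congrArg (Pi.evalAlgHom R (fun _ => R) x) hp
  rw [MvPolynomial.comp_aeval_apply, map_zero] at hx
  rwa [map_zero, ← MvPolynomial.coe_aeval_eq_eval]

theorem exists_sum_mul_pow_eq {K ι : Type*} [Field K] [IsAlgClosed K] [Fintype ι] [DecidableEq ι]
    (c : ι → ι → K) (d : ι → ℕ) (hd : ∀ t, d t ≠ 0) (hdiag : ∀ t, c t t ≠ 0)
    (htri : ∀ s t, s ≠ t → d t ≤ d s → c t s = 0) (y : ι → K) :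
    ∃ x : ι → K, ∀ t, ∑ s, c t s * x s ^ d t = y t := by
  suffices h : ∀ m, ∃ x : ι → K, ∀ t, d t < m → ∑ s, c t s * x s ^ d t = y t by
    obtain ⟨x, hx⟩ := h (Finset.univ.sup d + 1)
    exact ⟨x, fun t => hx t (Nat.lt_succ_of_le (Finset.le_sup (Finset.mem_univ t)))⟩
  intro m
  induction m with
  | zero => exact ⟨0, fun t ht => absurd ht (Nat.not_lt_zero _)⟩
  | succ m ih =>
    obtain ⟨x, hx⟩ := ih
    choose r hr using fun t => IsAlgClosed.exists_pow_nat_eq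
      ((y t - ∑ s ∈ Finset.univ.erase t, c t s * x s ^ d t) / c t t) (Nat.pos_of_ne_zero (hd t))
    set x' : ι → K := fun s => if d s = m then r s else x s
    -- only unknowns of degree `m` change; each enters no equation of degree `≤ m` but its own
    have hoff : ∀ t s, d t ≤ m → s ≠ t → c t s * x' s ^ d t = c t s * x s ^ d t := by
      intro t s ht hst
      by_cases hs : d s = m
      · rw [htri s t hst (hs ▸ ht), zero_mul, zero_mul]
      · simp only [x', if_neg hs]
    refine ⟨x', fun t ht => ?_⟩
    rcases (Nat.lt_succ_iff.1 ht).lt_or_eq with ht | ht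
    · rw [← hx t ht]
      refine Finset.sum_congr rfl fun s _ => ?_
      rcases eq_or_ne s t with rfl | hst
      · simp only [x', if_neg ht.ne]
      · exact hoff t s ht.le hst
    · rw [← Finset.add_sum_erase _ _ (Finset.mem_univ t),
        Finset.sum_congr rfl fun s hs => hoff t s ht.le (Finset.ne_of_mem_erase hs)]
      simp only [x', if_pos ht, hr]
      field_simp [hdiag t]
      ring

theorem trace_prod_map_blockDiagonal' {A ι R : Type*} [Fintype ι] [DecidableEq ι] [Semiring R]
    {m : ι → Type*} [∀ i, Fintype (m i)] [∀ i, DecidableEq (m i)]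
    (Z : ∀ i, A → Matrix (m i) (m i) R) (u : List A) :
    trace (u.map fun a => blockDiagonal' fun i => Z i a).prod =
      ∑ i, trace (u.map (Z i)).prod := by
  have h := List.prod_hom (u.map fun a i => Z i a) (blockDiagonal'RingHom m R)
  simp only [List.map_map, Function.comp_def, blockDiagonal'RingHom_apply] at h
  simp [h, trace_blockDiagonal', Pi.list_prod_apply, Function.comp_def]

theorem exists_mulHom_trace_eq {β R : Type*} [Fintype β] [DecidableEq β] [Semiring R] {N : ℕ}
    (hN : Fintype.card β ≤ N) :
    ∃ Φ : Matrix β β R →ₙ* Matrix (Fin N) (Fin N) R, ∀ M, trace (Φ M) = trace M := by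
  have e : β ⊕ Fin (N - Fintype.card β) ≃ Fin N :=
    Fintype.equivFinOfCardEq (by simp only [Fintype.card_sum, Fintype.card_fin]; omega)
  refine ⟨⟨fun M => (fromBlocks M 0 0 0).submatrix e.symm e.symm, fun M M' => ?_⟩, fun M => ?_⟩
  · simp [submatrix_mul_equiv, fromBlocks_multiply]
  · change ∑ i, fromBlocks M 0 0 0 (e.symm i) (e.symm i) = ∑ i, M i i
    rw [Equiv.sum_comp e.symm (fun i => fromBlocks M 0 0 0 i i), Fintype.sum_sum_type]
    simp

theorem exists_pW_eq_trace_prod {L N : ℕ} {β : Type*} [Fintype β] [DecidableEq β]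
    (hN : Fintype.card β ≤ N) :
    ∃ Φ : (Fin L → Matrix β β ℂ) → Fin L → Matrix (Fin N) (Fin N) ℂ,
      ∀ Y u, u ≠ [] → pW L N u (Φ Y) = trace (u.map Y).prod := by
  obtain ⟨Φ, hΦ⟩ := exists_mulHom_trace_eq (R := ℂ) hN
  refine ⟨fun Y a => Φ (Y a), fun Y u hu => ?_⟩
  rw [pW, wordProd, ← hΦ, ← List.prod_hom_nonempty Φ (by simpa using hu), List.map_map]
  rfl

section LabelledShift

variable {A R : Type*} [DecidableEq A] [Semiring R] {d : ℕ}

def labelledShift (f : ZMod d → A) (a : A) : Matrix (ZMod d) (ZMod d) R :=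
  Matrix.of fun i j => if f i = a ∧ j = i + 1 then 1 else 0

variable [NeZero d]

theorem prod_map_labelledShift_apply (f : ZMod d → A) (u : List A) (i j : ZMod d) :
    (u.map (labelledShift (R := R) f)).prod i j =
      if u = List.ofFn (fun k : Fin u.length => f (i + k)) ∧ j = i + u.length then 1 else 0 := by
  induction u generalizing i with
  | nil => simp [Matrix.one_apply, eq_comm]
  | cons a u ih =>
    rw [List.map_cons, List.prod_cons, Matrix.mul_apply, Finset.sum_eq_single (i + 1)]
    · have hshift : ∀ k : ℕ, i + (k + 1 : ℕ) = i + 1 + k := fun k => by push_cast; ring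
      simp only [labelledShift, Matrix.of_apply, ih, List.length_cons, List.ofFn_succ, Fin.val_zero,
        Fin.val_succ, hshift, List.cons.injEq, Nat.cast_zero, add_zero]
      by_cases ha : f i = a
      · simp [ha]
      · simp [ha, Ne.symm ha]
    · intro k _ hk
      simp [labelledShift, hk]
    · simp

theorem trace_prod_map_labelledShift (f : ZMod d → A) (u : List A) :
    trace (u.map (labelledShift (R := R) f)).prod =
      if d ∣ u.length then
        (#{i | u = List.ofFn (fun k : Fin u.length => f (i + k))} : R) else 0 := by
  simp only [trace, diag_apply, prod_map_labelledShift_apply, left_eq_add,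
    ZMod.natCast_eq_zero_iff]
  split_ifs with hdvd <;> simp [hdvd, Finset.sum_boole]

end LabelledShift

section CyclicWord

variable {A R : Type*}

def cyclicLabel (v : List A) [NeZero v.length] (i : ZMod v.length) : A :=
  v[i.val]'(ZMod.val_lt i)

theorem ofFn_cyclicLabel_eq_iff {u v : List A} [NeZero v.length] (hlen : u.length = v.length)
    (i : ZMod v.length) :
    u = List.ofFn (fun k : Fin u.length => cyclicLabel v (i + k)) ↔ u = v.rotate i.val := by
  have hlen' : (List.ofFn (fun k : Fin u.length => cyclicLabel v (i + k))).length =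
      (v.rotate i.val).length := by simp [hlen]
  refine iff_of_eq (congrArg _ (List.ext_getElem hlen' fun k hk _ => ?_))
  rw [List.length_ofFn] at hk
  simp only [List.getElem_ofFn, List.getElem_rotate, cyclicLabel, ZMod.val_add, ZMod.val_natCast,
    Nat.mod_eq_of_lt (hlen ▸ hk), add_comm]

variable [DecidableEq A] [Semiring R]

theorem trace_prod_map_labelledShift_cyclicLabel_self_ne_zero [CharZero R] (v : List A)
    [NeZero v.length] : trace (v.map (labelledShift (R := R) (cyclicLabel v))).prod ≠ 0 := by
  rw [trace_prod_map_labelledShift, if_pos dvd_rfl, Nat.cast_ne_zero]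
  exact Finset.card_ne_zero_of_mem (a := 0) (by simp [ofFn_cyclicLabel_eq_iff rfl])

theorem trace_prod_map_labelledShift_cyclicLabel_eq_zero {u v : List A} [NeZero v.length]
    (hu : u ≠ []) (hlen : u.length ≤ v.length) (hrot : ¬ v ~r u) :
    trace (u.map (labelledShift (R := R) (cyclicLabel v))).prod = 0 := by
  rw [trace_prod_map_labelledShift]
  split_ifs with hdvd
  · have hlen : u.length = v.length :=
      hlen.antisymm (Nat.le_of_dvd (List.length_pos_iff.2 hu) hdvd)
    simp only [ofFn_cyclicLabel_eq_iff hlen]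
    rw [Finset.filter_false_of_mem fun i _ h => hrot ⟨i.val, h.symm⟩, Finset.card_empty,
      Nat.cast_zero]
  · rfl

end CyclicWord

theorem stmt5_general (L K : ℕ)
    (w : Fin K → List (Fin L))
    (hne : ∀ t, w t ≠ [])
    (hcyc : ∀ t t', t ≠ t' → ¬ (w t).IsRotated (w t')) :
    ∃ N₀ : ℕ, ∀ N : ℕ, N₀ ≤ N →
      AlgebraicIndependent ℂ (fun t : Fin K => pW L N (w t)) := by
  have _ : ∀ s, NeZero (w s).length := fun s => ⟨by simpa using hne s⟩
  set c : Fin K → Fin K → ℂ := fun t s =>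
    trace ((w t).map (labelledShift (cyclicLabel (w s)))).prod
  refine ⟨∑ s, (w s).length, fun N hN => ?_⟩
  obtain ⟨Φ, hΦ⟩ := exists_pW_eq_trace_prod (L := L) (β := Σ s, ZMod (w s).length)
    (by simpa using hN)
  let X (x : Fin K → ℂ) : Fin L → Matrix (Fin N) (Fin N) ℂ :=
    Φ fun a => blockDiagonal' fun s => x s • labelledShift (cyclicLabel (w s)) a
  have hX (x : Fin K → ℂ) (t : Fin K) : pW L N (w t) (X x) = ∑ s, c t s * x s ^ (w t).length := by
    rw [hΦ _ _ (hne t), trace_prod_map_blockDiagonal']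
    refine Finset.sum_congr rfl fun s _ => ?_
    have hscale := ((w t).map (labelledShift (R := ℂ) (cyclicLabel (w s)))).smul_prod (x s)
    simp only [List.map_map, List.length_map, Function.comp_def] at hscale
    rw [← hscale, trace_smul, smul_eq_mul, mul_comm]
  refine algebraicIndependent_of_surjective (fun X t => pW L N (w t) X) fun y => ?_
  obtain ⟨x, hx⟩ := exists_sum_mul_pow_eq c (fun t => (w t).length) (fun t => NeZero.ne _)
    (fun t => trace_prod_map_labelledShift_cyclicLabel_self_ne_zero (w t))
    (fun s t hst hlen => trace_prod_map_labelledShift_cyclicLabel_eq_zero (hne t) hlen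
      (hcyc s t hst)) y
  exact ⟨X x, funext fun t => (hX x t).trans (hx t)⟩

/-- Fix `L ≥ 1` and `n ≥ 1`, and let `w⁽¹⁾,…,w⁽ᴷ⁾` be nonempty words
over the alphabet `[L]`, each of length at most `n`, pairwise not cyclically equivalent.
Then there exists `N₀` such that for every `N ≥ N₀` the polynomial functions
`p_{w⁽¹⁾;N},…,p_{w⁽ᴷ⁾;N}` are algebraically independent over `ℂ` in the `ℂ`-algebra of
all functions `(Mat(N,ℂ))^L → ℂ`. -/
theorem stmt5 (L n K : ℕ) (hL : 1 ≤ L) (hn : 1 ≤ n)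
    (w : Fin K → List (Fin L))
    (hne : ∀ t, w t ≠ [])
    (hlen : ∀ t, (w t).length ≤ n)
    (hcyc : ∀ t t', t ≠ t' → ¬ (w t).IsRotated (w t')) :
    ∃ N₀ : ℕ, ∀ N : ℕ, N₀ ≤ N →
      AlgebraicIndependent ℂ (fun t : Fin K => pW L N (w t)) :=
  stmt5_general L K w hne hcyc
end
end

section
/- Fix integers L ≥ 1, d ≥ 1 and n ≥ 1, and let w^{(1)},…,w^{(K)} be words over the alphabet [L], each of length at most n, which are pairwise not cyclically equivalent. Then there exists N₀ ≥ d such that for every N ≥ N₀ the family consisting of the functions p_{w^{(1)};N},…,p_{w^{(K)};N} together with all the functions p_{ij;w;N}, where 1 ≤ i,j ≤ d and w ranges over all words over [L] of length at most n, is algebraically independent over ℂ in the ℂ-algebra of all functions (Mat(N,ℂ))^L → ℂ (with pointwise operations). -/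
noncomputable section

namespace Stmt6

open Matrix

abbrev V (L n : ℕ) := {v : List (Fin L) // v ≠ [] ∧ v.length ≤ n}

noncomputable instance (L n : ℕ) : Fintype (V L n) :=
  Fintype.ofInjective (fun v => (fun i : Fin n => v.1[i.val]?)) (by
    rintro ⟨v, hv, hvl⟩ ⟨u, hu, hul⟩ h
    apply Subtype.ext
    dsimp only at h ⊢
    apply List.ext_getElem?
    intro i
    by_cases hi : i < n
    · exact congrFun h ⟨i, hi⟩
    · rw [List.getElem?_eq_none (by omega), List.getElem?_eq_none (by omega)])

abbrev IE (L d n : ℕ) := Fin d ⊕ ((Fin d × V L n) ⊕ Fin d)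

variable {L d n : ℕ}

def dep (c : Fin d → Fin d → V L n → ℂ) (ℓ : Fin L) (j : Fin d) (u : List (Fin L)) :
    IE L d n → ℂ := fun r =>
  if h : u.length + 1 ≤ n then
    match r with
    | Sum.inl i => c i j ⟨ℓ :: u.reverse, by simp, by simpa using h⟩
    | Sum.inr (Sum.inl (j', u')) => if j' = j ∧ u'.1 = u ++ [ℓ] then 1 else 0
    | Sum.inr (Sum.inr i) => - c i j ⟨ℓ :: u.reverse, by simp, by simpa using h⟩
  else 0

def XE (c : Fin d → Fin d → V L n → ℂ) (ℓ : Fin L) : Matrix (IE L d n) (IE L d n) ℂ :=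
  fun r s =>
  match s with
  | Sum.inl j => dep c ℓ j [] r
  | Sum.inr (Sum.inl (j', u')) => dep c ℓ j' u'.1 r
  | Sum.inr (Sum.inr i) => dep c ℓ i [] r

def colE (c : Fin d → Fin d → V L n → ℂ) (vv : V L n) (j : Fin d) : IE L d n → ℂ := fun r =>
  match r with
  | Sum.inl i => c i j vv
  | Sum.inr (Sum.inl (j', u')) => if j' = j ∧ u'.1 = vv.1.reverse then 1 else 0
  | Sum.inr (Sum.inr i) => - c i j vv

lemma dep_rev (c : Fin d → Fin d → V L n → ℂ) (ℓ : Fin L) (j : Fin d) (t : List (Fin L))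
    (h : t.length + 1 ≤ n) (r : IE L d n) :
    dep c ℓ j t.reverse r = colE c ⟨ℓ :: t, by simp, by simpa using h⟩ j r := by
  have h' : t.reverse.length + 1 ≤ n := by simpa using h
  match r with
  | Sum.inl i =>
    simp only [dep, dif_pos h', colE]
    congr 1
    exact Subtype.ext (by simp)
  | Sum.inr (Sum.inl (j', u')) =>
    simp only [dep, dif_pos h', colE, List.reverse_cons]
  | Sum.inr (Sum.inr i) =>
    simp only [dep, dif_pos h', colE]
    congr 2
    exact Subtype.ext (by simp)

lemma prodE_col (c : Fin d → Fin d → V L n → ℂ) (v : List (Fin L)) :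
    ∀ (hv : v ≠ []) (hl : v.length ≤ n) (j : Fin d) (r : IE L d n),
      ((v.map (XE c)).prod) r (Sum.inl j) = colE c ⟨v, hv, hl⟩ j r := by
  induction v with
  | nil => intro hv; exact absurd rfl hv
  | cons ℓ t ih =>
    intro hv hl j r
    rcases eq_or_ne t [] with rfl | ht
    · simp only [List.map_cons, List.map_nil, List.prod_cons, List.prod_nil, mul_one]
      exact dep_rev c ℓ j [] (by simpa using hl) r
    · have hlt : t.length ≤ n := by simp only [List.length_cons] at hl; omega
      simp only [List.map_cons, List.prod_cons]
      rw [Matrix.mul_apply]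
      simp only [ih ht hlt]
      rw [Fintype.sum_sum_type, Fintype.sum_sum_type]
      have e1 : ∀ i : Fin d, XE c ℓ r (Sum.inl i) * colE c ⟨t, ht, hlt⟩ j (Sum.inl i)
          = dep c ℓ i [] r * c i j ⟨t, ht, hlt⟩ := fun i => rfl
      have e3 : ∀ i : Fin d, XE c ℓ r (Sum.inr (Sum.inr i)) * colE c ⟨t, ht, hlt⟩ j (Sum.inr (Sum.inr i))
          = -(dep c ℓ i [] r * c i j ⟨t, ht, hlt⟩) := fun i => by
        show dep c ℓ i [] r * (- c i j ⟨t, ht, hlt⟩) = _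
        ring
      simp only [e1, e3]
      rw [Finset.sum_neg_distrib]
      set tR : V L n := ⟨t.reverse, by simpa using ht, by simpa using hlt⟩ with htR
      have key : (∑ x : Fin d × V L n,
          XE c ℓ r (Sum.inr (Sum.inl x)) * colE c ⟨t, ht, hlt⟩ j (Sum.inr (Sum.inl x)))
          = dep c ℓ j t.reverse r := by
        have step : ∀ (x : Fin d × V L n),
            XE c ℓ r (Sum.inr (Sum.inl x)) * colE c ⟨t, ht, hlt⟩ j (Sum.inr (Sum.inl x))
            = if x = (j, tR) then dep c ℓ j t.reverse r else 0 := by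
          rintro ⟨j', u'⟩
          show dep c ℓ j' u'.1 r * (if j' = j ∧ u'.1 = t.reverse then 1 else 0) = _
          by_cases hx : j' = j ∧ u'.1 = t.reverse
          · obtain ⟨rfl, h2⟩ := hx
            rw [if_pos ⟨rfl, h2⟩, mul_one, h2,
              if_pos (by rw [Prod.ext_iff]; exact ⟨rfl, Subtype.ext h2⟩)]
          · rw [if_neg hx, mul_zero, if_neg (by intro hp; rw [Prod.ext_iff] at hp; exact hx ⟨hp.1, by simp only at hp; rw [hp.2, htR]⟩)]
        rw [Finset.sum_congr rfl (fun x _ => step x), Finset.sum_ite_eq' Finset.univ (j, tR)]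
        simp
      rw [key, dep_rev c ℓ j t (by simpa using hl) r]
      ring

lemma prodE_entry (c : Fin d → Fin d → V L n → ℂ) (v : List (Fin L)) (hv : v ≠ [])
    (hl : v.length ≤ n) (i j : Fin d) :
    ((v.map (XE c)).prod) (Sum.inl i) (Sum.inl j) = c i j ⟨v, hv, hl⟩ :=
  prodE_col c v hv hl j (Sum.inl i)

/-! ### Trace blocks -/

variable {K : ℕ}

abbrev mT (w : Fin K → List (Fin L)) (t : Fin K) : ℕ := (w t).length - 1 + 1

lemma mT_eq (w : Fin K → List (Fin L)) (hne : ∀ t, w t ≠ []) (t : Fin K) :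
    mT w t = (w t).length := by
  have : (w t).length ≠ 0 := by simpa using hne t
  unfold mT; omega

abbrev IT (w : Fin K → List (Fin L)) : Type := (t : Fin K) × ZMod (mT w t)

def letterT (w : Fin K → List (Fin L)) (hne : ∀ t, w t ≠ []) (t : Fin K)
    (k : ZMod (mT w t)) : Fin L :=
  (w t).reverse.get ⟨k.val, by
    rw [List.length_reverse, ← mT_eq w hne t]; exact ZMod.val_lt k⟩

def XT (w : Fin K → List (Fin L)) (hne : ∀ t, w t ≠ []) (a : Fin K → ℂ) (ℓ : Fin L) :
    Matrix (IT w) (IT w) ℂ := fun r s =>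
  if r = ⟨s.1, s.2 + 1⟩ ∧ ℓ = letterT w hne s.1 s.2 then (if s.2 = 0 then a s.1 else 1) else 0

def matchT (w : Fin K → List (Fin L)) (hne : ∀ t, w t ≠ []) (t : Fin K)
    (k : ZMod (mT w t)) (v : List (Fin L)) : Prop :=
  ∀ s : Fin v.length,
    v.reverse.get ⟨s.1, by simpa using s.2⟩ = letterT w hne t (k + (s.1 : ZMod (mT w t)))

instance (w : Fin K → List (Fin L)) (hne : ∀ t, w t ≠ []) (t : Fin K)
    (k : ZMod (mT w t)) (v : List (Fin L)) : Decidable (matchT w hne t k v) := by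
  unfold matchT; infer_instance

def cntT (w : Fin K → List (Fin L)) (t : Fin K) (k : ZMod (mT w t)) (p : ℕ) : ℕ :=
  ((Finset.range p).filter (fun s : ℕ => k + (s : ZMod (mT w t)) = 0)).card

lemma cntT_succ (w : Fin K → List (Fin L)) (t : Fin K) (k : ZMod (mT w t)) (p : ℕ) :
    cntT w t k (p + 1) = cntT w t k p + (if k + (p : ZMod (mT w t)) = 0 then 1 else 0) := by
  unfold cntT
  rw [Finset.range_add_one, Finset.filter_insert]
  split_ifs with h
  · rw [Finset.card_insert_of_notMem (by simp)]
  · rfl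

lemma matchT_nil (w : Fin K → List (Fin L)) (hne : ∀ t, w t ≠ []) (t : Fin K)
    (k : ZMod (mT w t)) : matchT w hne t k [] := fun s => absurd s.2 (by simp)

lemma matchT_cons (w : Fin K → List (Fin L)) (hne : ∀ t, w t ≠ []) (t : Fin K)
    (k : ZMod (mT w t)) (ℓ : Fin L) (v' : List (Fin L)) :
    matchT w hne t k (ℓ :: v') ↔
      (matchT w hne t k v' ∧ ℓ = letterT w hne t (k + (v'.length : ZMod (mT w t)))) := by
  unfold matchT
  constructor
  · intro h
    refine ⟨fun s => ?_, ?_⟩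
    · have := h ⟨s.1, by simp⟩
      rw [← this]
      simp only [List.get_eq_getElem, List.reverse_cons]
      rw [List.getElem_append_left (by simp [s.2])]
    · have := h ⟨v'.length, by simp⟩
      rw [← this]
      simp only [List.get_eq_getElem, List.reverse_cons]
      rw [List.getElem_append_right (by simp)]
      simp
  · rintro ⟨h1, h2⟩ s
    rcases Nat.lt_or_ge s.1 v'.length with hs | hs
    · have := h1 ⟨s.1, hs⟩
      rw [← this]
      simp only [List.get_eq_getElem, List.reverse_cons]
      rw [List.getElem_append_left (by simp [hs])]
    · have hs' : s.1 = v'.length := by have := s.2; simp only [List.length_cons] at this; omega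
      simp only [List.get_eq_getElem, List.reverse_cons, hs']
      rw [List.getElem_append_right (by simp)]
      simpa using h2

lemma prodT_col (w : Fin K → List (Fin L)) (hne : ∀ t, w t ≠ []) (a : Fin K → ℂ)
    (v : List (Fin L)) :
    ∀ (t : Fin K) (k : ZMod (mT w t)) (r : IT w),
    ((v.map (XT w hne a)).prod) r ⟨t, k⟩ =
      if r = ⟨t, k + (v.length : ZMod (mT w t))⟩ ∧ matchT w hne t k v
      then a t ^ cntT w t k v.length else 0 := by
  induction v with
  | nil =>
    intro t k r
    simp only [List.map_nil, List.prod_nil, List.length_nil, Nat.cast_zero, add_zero,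
      matchT_nil, and_true]
    rw [Matrix.one_apply]
    simp [cntT]
  | cons ℓ v' ih =>
    intro t k r
    simp only [List.map_cons, List.prod_cons]
    rw [Matrix.mul_apply]
    simp only [ih]
    have step : ∀ s : IT w,
        XT w hne a ℓ r s *
          (if s = ⟨t, k + (v'.length : ZMod (mT w t))⟩ ∧ matchT w hne t k v'
           then a t ^ cntT w t k v'.length else 0)
        = if s = (⟨t, k + (v'.length : ZMod (mT w t))⟩ : IT w) then
            XT w hne a ℓ r s *
              (if matchT w hne t k v' then a t ^ cntT w t k v'.length else 0)
          else 0 := by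
      intro s
      by_cases h1 : s = (⟨t, k + (v'.length : ZMod (mT w t))⟩ : IT w)
      · rw [if_pos h1, mul_ite, mul_zero]
        congr 1
        simp [h1]
      · rw [if_neg h1, if_neg (fun hc => h1 hc.1), mul_zero]
    rw [Finset.sum_congr rfl (fun s _ => step s), Finset.sum_ite_eq' Finset.univ, if_pos (Finset.mem_univ _)]
    have hcast : (k + (v'.length : ZMod (mT w t))) + 1 = k + ((v'.length + 1 : ℕ) : ZMod (mT w t)) := by
      push_cast; ring
    simp only [XT, List.length_cons, matchT_cons w hne t k ℓ v', cntT_succ w t k v'.length, hcast]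
    split_ifs <;> first
      | tauto
      | (rw [pow_succ]; ring)
      | simp
      | ring

def blockTr (w : Fin K → List (Fin L)) (hne : ∀ t, w t ≠ []) (x : ℂ) (t : Fin K)
    (v : List (Fin L)) : ℂ :=
  ∑ k ∈ Finset.univ.filter
      (fun k : ZMod (mT w t) => k = k + (v.length : ZMod (mT w t)) ∧ matchT w hne t k v),
    x ^ cntT w t k v.length

lemma trace_prodT (w : Fin K → List (Fin L)) (hne : ∀ t, w t ≠ []) (a : Fin K → ℂ)
    (v : List (Fin L)) :
    ((v.map (XT w hne a)).prod).trace = ∑ t : Fin K, blockTr w hne (a t) t v := by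
  rw [Matrix.trace]
  rw [← Finset.univ_sigma_univ, Finset.sum_sigma]
  refine Finset.sum_congr rfl (fun t _ => ?_)
  unfold blockTr
  rw [Finset.sum_filter]
  refine Finset.sum_congr rfl (fun k _ => ?_)
  show (v.map (XT w hne a)).prod ⟨t, k⟩ ⟨t, k⟩ = _
  rw [prodT_col w hne a v t k ⟨t, k⟩]
  congr 1
  simp [and_comm]

def rho (w : Fin K → List (Fin L)) (hne : ∀ t, w t ≠ []) (t : Fin K) : ℕ :=
  (Finset.univ.filter (fun k : ZMod (mT w t) => matchT w hne t k (w t))).card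

lemma val_add_natCast {m : ℕ} [NeZero m] (k : ZMod m) (s : ℕ) :
    (k + (s : ZMod m)).val = (k.val + s) % m := by
  rw [ZMod.val_add, ZMod.val_natCast]
  conv_rhs => rw [Nat.add_mod]
  rw [Nat.mod_eq_of_lt (ZMod.val_lt k)]

lemma cnt_self (w : Fin K → List (Fin L)) (hne : ∀ t, w t ≠ []) (t : Fin K)
    (k : ZMod (mT w t)) : cntT w t k ((w t).length) = 1 := by
  unfold cntT
  rw [← mT_eq w hne t]
  rw [show (Finset.range (mT w t)).filter (fun s : ℕ => k + (s : ZMod (mT w t)) = 0)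
      = {(-k).val} from ?_]
  · rw [Finset.card_singleton]
  · ext s
    simp only [Finset.mem_filter, Finset.mem_range, Finset.mem_singleton]
    constructor
    · rintro ⟨hs, h0⟩
      have : (s : ZMod (mT w t)) = -k := by
        have := congrArg (fun z => z - k) h0
        simpa [sub_eq_add_neg, add_comm] using this
      rw [← this, ZMod.val_cast_of_lt hs]
    · rintro rfl
      refine ⟨ZMod.val_lt _, ?_⟩
      rw [ZMod.natCast_val, ZMod.cast_id]
      ring

lemma blockTr_self (w : Fin K → List (Fin L)) (hne : ∀ t, w t ≠ []) (t : Fin K) (x : ℂ) :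
    blockTr w hne x t (w t) = ((rho w hne t : ℕ) : ℂ) * x := by
  unfold blockTr rho
  have h0 : ((w t).length : ZMod (mT w t)) = 0 := by
    rw [← mT_eq w hne t, ZMod.natCast_self]
  have hcond : ∀ k : ZMod (mT w t),
      (k = k + ((w t).length : ZMod (mT w t)) ∧ matchT w hne t k (w t)) ↔ matchT w hne t k (w t) := by
    intro k
    rw [h0, add_zero]
    simp
  rw [Finset.filter_congr (fun k _ => hcond k)]
  rw [Finset.sum_congr rfl (fun k _ => by rw [cnt_self w hne t k, pow_one])]
  rw [Finset.sum_const, nsmul_eq_mul]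

lemma rho_pos (w : Fin K → List (Fin L)) (hne : ∀ t, w t ≠ []) (t : Fin K) :
    0 < rho w hne t := by
  rw [rho, Finset.card_pos]
  refine ⟨0, Finset.mem_filter.2 ⟨Finset.mem_univ _, fun s => ?_⟩⟩
  have hs : s.1 < mT w t := by rw [mT_eq w hne t]; exact s.2
  show (w t).reverse.get _ = (w t).reverse.get _
  congr 1
  apply Fin.ext
  show (s.1 : ℕ) = ((0 : ZMod (mT w t)) + (s.1 : ZMod (mT w t))).val
  rw [zero_add, ZMod.val_cast_of_lt hs]

lemma blockTr_zero_of_longer (w : Fin K → List (Fin L)) (hne : ∀ t, w t ≠ []) (x : ℂ)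
    (t' t : Fin K) (h : (w t).length < (w t').length) :
    blockTr w hne x t' (w t) = 0 := by
  unfold blockTr
  refine Finset.sum_eq_zero (fun k hk => ?_)
  exfalso
  obtain ⟨hdiag, -⟩ := (Finset.mem_filter.1 hk).2
  have h0 : (((w t).length : ℕ) : ZMod (mT w t')) = 0 := by
    have := congrArg (fun z => z - k) hdiag
    simpa [sub_eq_add_neg, add_comm, add_assoc] using this.symm
  have hdvd : mT w t' ∣ (w t).length := (ZMod.natCast_eq_zero_iff _ _).1 h0
  have hpos : 0 < (w t).length := List.length_pos_iff.2 (hne t)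
  have := Nat.le_of_dvd hpos hdvd
  rw [mT_eq w hne t'] at this
  omega

lemma blockTr_zero_of_rot (w : Fin K → List (Fin L)) (hne : ∀ t, w t ≠ []) (x : ℂ)
    (t' t : Fin K) (hlen : (w t').length = (w t).length)
    (hrot : ¬ (w t').IsRotated (w t)) :
    blockTr w hne x t' (w t) = 0 := by
  unfold blockTr
  refine Finset.sum_eq_zero (fun k hk => ?_)
  exfalso
  obtain ⟨-, hmatch⟩ := (Finset.mem_filter.1 hk).2
  apply hrot
  have hm' : mT w t' = (w t').length := mT_eq w hne t'
  have hrev : ((w t').reverse.rotate k.val) = (w t).reverse := by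
    apply List.ext_get
    · simp [hlen]
    · intro i h1 h2
      rw [List.get_rotate]
      have hmi := hmatch ⟨i, by simpa using h2⟩
      rw [hmi]
      show (w t').reverse.get _ = (w t').reverse.get _
      congr 1
      apply Fin.ext
      show (i + k.val) % (w t').reverse.length = (k + ((i : ℕ) : ZMod (mT w t'))).val
      rw [val_add_natCast k i, List.length_reverse, ← hm', Nat.add_comm]
  have : (w t').reverse.IsRotated (w t).reverse := ⟨k.val, hrev⟩
  have := this.reverse
  simpa using this

def solveA (w : Fin K → List (Fin L)) (hne : ∀ t, w t ≠ []) (γτ : Fin K → ℂ) : ℕ → Fin K → ℂ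
  | 0 => fun _ => 0
  | (b+1) => fun t =>
      if (w t).length = b + 1 then
        (γτ t - ∑ t' ∈ Finset.univ.filter (fun t' => (w t').length < (w t).length),
            blockTr w hne (solveA w hne γτ b t') t' (w t)) / ((rho w hne t : ℕ) : ℂ)
      else solveA w hne γτ b t

lemma solveA_stab (w : Fin K → List (Fin L)) (hne : ∀ t, w t ≠ []) (γτ : Fin K → ℂ)
    (t : Fin K) : ∀ b, (w t).length ≤ b → solveA w hne γτ b t = solveA w hne γτ ((w t).length) t := by
  intro b
  induction b with
  | zero =>
    intro h
    have := List.length_pos_iff.2 (hne t)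
    omega
  | succ b ih =>
    intro h
    rcases Nat.lt_or_ge ((w t).length) (b+1) with h1 | h1
    · rw [show solveA w hne γτ (b+1) t = if (w t).length = b + 1 then _ else solveA w hne γτ b t from rfl,
        if_neg (by omega)]
      exact ih (by omega)
    · have : (w t).length = b + 1 := by omega
      rw [this]

lemma solveA_spec (w : Fin K → List (Fin L)) (hne : ∀ t, w t ≠ []) (γτ : Fin K → ℂ)
    (hcyc : ∀ t t', t ≠ t' → ¬ (w t).IsRotated (w t'))
    (B : ℕ) (hB : ∀ t, (w t).length ≤ B) (t : Fin K) :
    ∑ t', blockTr w hne (solveA w hne γτ B t') t' (w t) = γτ t := by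
  set aa := solveA w hne γτ B with haa
  rw [← Finset.sum_filter_add_sum_filter_not Finset.univ
    (fun t' => (w t').length < (w t).length)]
  have hsecond : ∑ t' ∈ Finset.univ.filter (fun t' => ¬ (w t').length < (w t).length),
      blockTr w hne (aa t') t' (w t) = ((rho w hne t : ℕ) : ℂ) * aa t := by
    rw [Finset.sum_eq_single_of_mem t (by simp)]
    · exact blockTr_self w hne t (aa t)
    · intro b hb hbt
      simp only [Finset.mem_filter, Finset.mem_univ, true_and, not_lt] at hb
      rcases Nat.lt_or_ge ((w t).length) ((w b).length) with h1 | h1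
      · exact blockTr_zero_of_longer w hne (aa b) b t h1
      · exact blockTr_zero_of_rot w hne (aa b) b t (by omega) (hcyc b t hbt)
  rw [hsecond]
  have hmt : 0 < (w t).length := List.length_pos_iff.2 (hne t)
  have haat : aa t = (γτ t - ∑ t' ∈ Finset.univ.filter (fun t' => (w t').length < (w t).length),
      blockTr w hne (aa t') t' (w t)) / ((rho w hne t : ℕ) : ℂ) := by
    rw [haa, solveA_stab w hne γτ t B (hB t)]
    have hm1 : (w t).length = ((w t).length - 1) + 1 := by omega
    conv_lhs => rw [hm1]
    rw [show solveA w hne γτ (((w t).length - 1) + 1) t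
        = if (w t).length = ((w t).length - 1) + 1 then
            (γτ t - ∑ t' ∈ Finset.univ.filter (fun t' => (w t').length < (w t).length),
              blockTr w hne (solveA w hne γτ ((w t).length - 1) t') t' (w t)) / ((rho w hne t : ℕ) : ℂ)
          else solveA w hne γτ ((w t).length - 1) t from rfl]
    rw [if_pos hm1]
    congr 2
    refine Finset.sum_congr rfl (fun t' ht' => ?_)
    simp only [Finset.mem_filter, Finset.mem_univ, true_and] at ht'
    rw [solveA_stab w hne γτ t' ((w t).length - 1) (by omega),
      ← solveA_stab w hne γτ t' B (hB t')]
  rw [haat, mul_div_cancel₀]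
  · ring
  · have := rho_pos w hne t
    exact Nat.cast_ne_zero.mpr (by omega)
lemma prod_fromBlocks_diag {α β : Type*} [Fintype α] [Fintype β] [DecidableEq α] [DecidableEq β]
    (A : Fin L → Matrix α α ℂ) (D : Fin L → Matrix β β ℂ) (v : List (Fin L)) :
    (v.map (fun ℓ => Matrix.fromBlocks (A ℓ) 0 0 (D ℓ))).prod
      = Matrix.fromBlocks ((v.map A).prod) 0 0 ((v.map D).prod) := by
  induction v with
  | nil => simp [← Matrix.fromBlocks_one]
  | cons ℓ v ih => simp [ih, Matrix.fromBlocks_multiply]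

lemma prod_fromBlocks_diag3 {α β γ : Type*} [Fintype α] [Fintype β] [Fintype γ]
    [DecidableEq α] [DecidableEq β] [DecidableEq γ] [DecidableEq (α ⊕ (β ⊕ γ))]
    (A : Fin L → Matrix α α ℂ) (B : Fin L → Matrix β β ℂ) (C : Fin L → Matrix γ γ ℂ)
    (v : List (Fin L)) :
    (v.map (fun ℓ => Matrix.fromBlocks (A ℓ) 0 0 (Matrix.fromBlocks (B ℓ) 0 0 (C ℓ)))).prod
      = Matrix.fromBlocks ((v.map A).prod) 0 0
          (Matrix.fromBlocks ((v.map B).prod) 0 0 ((v.map C).prod)) := by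
  induction v with
  | nil =>
    simp only [List.map_nil, List.prod_nil]
    ext i j
    rcases i with i | (i | i) <;> rcases j with j | (j | j) <;>
      simp [Matrix.fromBlocks, Matrix.one_apply]
  | cons ℓ v ih => simp [ih, Matrix.fromBlocks_multiply]

lemma prod_zero {β : Type*} [Fintype β] [DecidableEq β] (v : List (Fin L)) (hv : v ≠ []) :
    (v.map (fun _ : Fin L => (0 : Matrix β β ℂ))).prod = 0 := by
  cases v with
  | nil => exact absurd rfl hv
  | cons a t => simp

lemma trace_fromBlocks' {α β : Type*} [Fintype α] [Fintype β] (A : Matrix α α ℂ)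
    (B : Matrix α β ℂ) (C : Matrix β α ℂ) (D : Matrix β β ℂ) :
    (Matrix.fromBlocks A B C D).trace = A.trace + D.trace := by
  simp [Matrix.trace, Matrix.diag, Fintype.sum_sum_type]

lemma trace_reindex' {α : Type*} [Fintype α] {N : ℕ} (e : α ≃ Fin N) (M : Matrix α α ℂ) :
    (Matrix.reindex e e M).trace = M.trace := by
  simp only [Matrix.reindex_apply, Matrix.trace, Matrix.diag, Matrix.submatrix_apply]
  exact Equiv.sum_comp e.symm fun j => M j j

lemma prod_reindex {α : Type*} [Fintype α] [DecidableEq α] {N : ℕ} (e : α ≃ Fin N)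
    (M : Fin L → Matrix α α ℂ) (v : List (Fin L)) :
    (v.map (fun ℓ => (Matrix.reindex e e) (M ℓ))).prod = Matrix.reindex e e ((v.map M).prod) := by
  induction v with
  | nil => simp
  | cons ℓ t ih =>
    rw [List.map_cons, List.prod_cons, ih, List.map_cons, List.prod_cons,
      Matrix.reindex_apply, Matrix.reindex_apply, Matrix.reindex_apply,
      Matrix.submatrix_mul_equiv]

end Stmt6

/-- Fix `L ≥ 1`, `d ≥ 1` and `n ≥ 1`, and let `w⁽¹⁾,…,w⁽ᴷ⁾` be nonempty
words over `[L]`, each of length at most `n`, pairwise not cyclically equivalent.  Then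
there exists `N₀ ≥ d` such that for every `N ≥ N₀` the family consisting of the functions
`p_{w⁽¹⁾;N},…,p_{w⁽ᴷ⁾;N}` together with all functions `p_{ij;v;N}` (`1 ≤ i,j ≤ d`, `v` a
nonempty word of length at most `n`) is algebraically independent over `ℂ` in the algebra
of all functions `(Mat(N,ℂ))^L → ℂ`. -/
theorem stmt6 (L d n K : ℕ) (hL : 1 ≤ L) (hd : 1 ≤ d) (hn : 1 ≤ n)
    (w : Fin K → List (Fin L))
    (hne : ∀ t, w t ≠ [])
    (hlen : ∀ t, (w t).length ≤ n)
    (hcyc : ∀ t t', t ≠ t' → ¬ (w t).IsRotated (w t')) :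
    ∃ N₀ : ℕ, d ≤ N₀ ∧ ∀ N : ℕ, N₀ ≤ N → ∀ (hdN : d ≤ N),
      AlgebraicIndependent ℂ
        (Sum.elim (fun t : Fin K => pW L N (w t))
          (fun q : Fin d × Fin d × {v : List (Fin L) // v ≠ [] ∧ v.length ≤ n} =>
            pE L N q.2.2.1 (Fin.castLE hdN q.1) (Fin.castLE hdN q.2.1))) := by
  classical
  set Q : ℕ := Fintype.card (Stmt6.IE L d n) + Fintype.card (Stmt6.IT w) with hQ
  refine ⟨d + Q, by omega, ?_⟩
  intro N hN hdN
  rw [algebraicIndependent_iff]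
  intro p hp
  refine MvPolynomial.funext (fun y => ?_)
  rw [map_zero]
  -- construct the matrices
  set c : Fin d → Fin d → Stmt6.V L n → ℂ := fun i j v => y (Sum.inr (i, j, v)) with hc
  set τ : Fin K → ℂ := fun t => (((w t).map (Stmt6.XE c)).prod).trace with hτ
  set γτ : Fin K → ℂ := fun t => y (Sum.inl t) - τ t with hγτ
  set a : Fin K → ℂ := Stmt6.solveA w hne γτ n with ha
  set P : ℕ := N - Q with hP
  have hcard : Fintype.card (((Fin d × Stmt6.V L n) ⊕ Fin d) ⊕ (Stmt6.IT w ⊕ Fin P)) = N - d := by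
    have h1 : Fintype.card (Stmt6.IE L d n)
        = d + (Fintype.card ((Fin d × Stmt6.V L n) ⊕ Fin d)) := by
      simp [Fintype.card_sum]
    have h2 : Fintype.card (((Fin d × Stmt6.V L n) ⊕ Fin d) ⊕ (Stmt6.IT w ⊕ Fin P))
        = Fintype.card ((Fin d × Stmt6.V L n) ⊕ Fin d) + (Fintype.card (Stmt6.IT w) + P) := by
      simp [Fintype.card_sum]
    omega
  set e1 : (((Fin d × Stmt6.V L n) ⊕ Fin d) ⊕ (Stmt6.IT w ⊕ Fin P)) ≃ Fin (N - d) :=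
    Fintype.equivFinOfCardEq hcard with he1
  set e : (Stmt6.IE L d n ⊕ (Stmt6.IT w ⊕ Fin P)) ≃ Fin N :=
    ((Equiv.sumAssoc (Fin d) ((Fin d × Stmt6.V L n) ⊕ Fin d) (Stmt6.IT w ⊕ Fin P)).trans
      ((Equiv.refl (Fin d)).sumCongr e1)).trans
      (finSumFinEquiv.trans (finCongr (by omega))) with he
  have heval : ∀ i : Fin d, e (Sum.inl (Sum.inl i)) = Fin.castLE hdN i := by
    intro i
    apply Fin.ext
    simp [he, Equiv.sumAssoc, Equiv.sumCongr]
  have hesymm : ∀ i : Fin d, e.symm (Fin.castLE hdN i) = Sum.inl (Sum.inl i) := by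
    intro i
    rw [← heval i, Equiv.symm_apply_apply]
  set M : Fin L → Matrix (Stmt6.IE L d n ⊕ (Stmt6.IT w ⊕ Fin P))
      (Stmt6.IE L d n ⊕ (Stmt6.IT w ⊕ Fin P)) ℂ := fun ℓ =>
    Matrix.fromBlocks (Stmt6.XE c ℓ) 0 0
      (Matrix.fromBlocks (Stmt6.XT w hne a ℓ) 0 0 (0 : Matrix (Fin P) (Fin P) ℂ)) with hM
  set X : Fin L → Matrix (Fin N) (Fin N) ℂ := fun ℓ => Matrix.reindex e e (M ℓ) with hX
  have hprod : ∀ v : List (Fin L), wordProd L N X v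
      = Matrix.reindex e e (Matrix.fromBlocks ((v.map (Stmt6.XE c)).prod) 0 0
          (Matrix.fromBlocks ((v.map (Stmt6.XT w hne a)).prod) 0 0
            ((v.map (fun _ : Fin L => (0 : Matrix (Fin P) (Fin P) ℂ))).prod))) := by
    intro v
    show (v.map X).prod = _
    rw [hX, Stmt6.prod_reindex e M v]
    congr 1
    exact Stmt6.prod_fromBlocks_diag3 (Stmt6.XE c) (Stmt6.XT w hne a)
      (fun _ => (0 : Matrix (Fin P) (Fin P) ℂ)) v
  have hE : ∀ (i j : Fin d) (v : Stmt6.V L n),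
      pE L N v.1 (Fin.castLE hdN i) (Fin.castLE hdN j) X = y (Sum.inr (i, j, v)) := by
    intro i j v
    show wordProd L N X v.1 (Fin.castLE hdN i) (Fin.castLE hdN j) = _
    rw [hprod v.1, Matrix.reindex_apply, Matrix.submatrix_apply, hesymm i, hesymm j,
      Matrix.fromBlocks_apply₁₁, Stmt6.prodE_entry c v.1 v.2.1 v.2.2 i j]
  have hW : ∀ t : Fin K, pW L N (w t) X = y (Sum.inl t) := by
    intro t
    show (wordProd L N X (w t)).trace = _
    rw [hprod (w t), Stmt6.trace_reindex', Stmt6.trace_fromBlocks', Stmt6.trace_fromBlocks',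
      Stmt6.prod_zero (w t) (hne t), Matrix.trace_zero, add_zero,
      Stmt6.trace_prodT w hne a (w t), ha,
      Stmt6.solveA_spec w hne γτ hcyc n hlen t]
    show τ t + (y (Sum.inl t) - τ t) = y (Sum.inl t)
    ring
  -- conclude
  have hcongr := congrFun hp X
  rw [Pi.zero_apply] at hcongr
  have hyF : (fun s => (Sum.elim (fun t : Fin K => pW L N (w t))
      (fun q : Fin d × Fin d × {v : List (Fin L) // v ≠ [] ∧ v.length ≤ n} =>
        pE L N q.2.2.1 (Fin.castLE hdN q.1) (Fin.castLE hdN q.2.1))) s X) = y := by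
    funext s
    match s with
    | Sum.inl t => exact hW t
    | Sum.inr q => exact hE q.1 q.2.1 q.2.2
  have haev0 : (MvPolynomial.aeval (fun s => (Sum.elim (fun t : Fin K => pW L N (w t))
      (fun q : Fin d × Fin d × {v : List (Fin L) // v ≠ [] ∧ v.length ≤ n} =>
        pE L N q.2.2.1 (Fin.castLE hdN q.1) (Fin.castLE hdN q.2.1))) s X)) p = 0 := by
    have h2 := MvPolynomial.comp_aeval_apply
      (Sum.elim (fun t : Fin K => pW L N (w t))
        (fun q : Fin d × Fin d × {v : List (Fin L) // v ≠ [] ∧ v.length ≤ n} =>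
          pE L N q.2.2.1 (Fin.castLE hdN q.1) (Fin.castLE hdN q.2.1)))
      (Pi.evalAlgHom ℂ (fun _ : (Fin L → Matrix (Fin N) (Fin N) ℂ) => ℂ) X) p
    exact h2.symm.trans hcongr
  have haev : (MvPolynomial.aeval y) p = 0 := by rw [← hyF]; exact haev0
  rw [← MvPolynomial.eval₂_id, ← Algebra.algebraMap_self, ← MvPolynomial.aeval_def]
  exact haev
end
end
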